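/- For $\lambda, \alpha \in \mathbb{C}^*$ and $\beta, \gamma \in \mathbb{C}$, the formulas defining $\Theta(\lambda, \alpha, \beta, \gamma)$ make $\mathbb{C}[s,t]$ into a module over the affine-Virasoro algebra of type $A_1$. -/

import Mathlib

open MvPolynomial

/-- `ℂ[s,t]`, with `s = X 0` and `t = X 1`. -/
noncomputable abbrev P2 : Type := MvPolynomial (Fin 2) ℂ

/-- Substitution `g(s,t) ↦ g(s - i, t + a)`. -/
noncomputable def subST (i : ℤ) (a : ℂ) : P2 →ₐ[ℂ] P2 :=
  aeval ![X 0 - C (i : ℂ), X 1 + C a]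

/-- Action of `e_i` on `Θ(λ,α,β,γ)`: `e_i(g) = λ^i α (t/2+β) g(s-i, t-2)`. -/
noncomputable def thE (lam alp bet : ℂ) (i : ℤ) (g : P2) : P2 :=
  (lam ^ i * alp) • ((C (1/2 : ℂ) * X 1 + C bet) * subST i (-2) g)

/-- Action of `f_i` on `Θ(λ,α,β,γ)`: `f_i(g) = -(λ^i/α)(t/2-β) g(s-i, t+2)`. -/
noncomputable def thF (lam alp bet : ℂ) (i : ℤ) (g : P2) : P2 :=
  (-(lam ^ i / alp)) • ((C (1/2 : ℂ) * X 1 - C bet) * subST i 2 g)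

/-- Action of `h_i`: `h_i(g) = λ^i t g(s-i, t)`. -/
noncomputable def thH (lam : ℂ) (i : ℤ) (g : P2) : P2 :=
  lam ^ i • (X 1 * subST i 0 g)

/-- Action of `d_i`: `d_i(g) = λ^i (s + iγ) g(s-i, t)`. -/
noncomputable def thD (lam gam : ℂ) (i : ℤ) (g : P2) : P2 :=
  lam ^ i • ((X 0 + C ((i : ℂ) * gam)) * subST i 0 g)

/-- Action of `C`: `C(g) = 0`. -/
noncomputable def thC (g : P2) : P2 := 0

/-!
Since `ℂ` is infinite, a polynomial is determined by its values. At a point `(s, t)` every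
generator acts as a scalar multiple of evaluation at a shifted point, the shifts of a composite
add up, and each relation becomes an identity between the scalar prefactors, which is ring
arithmetic once `λ ^ (i + j) = λ ^ i * λ ^ j` (this is where `λ ≠ 0` enters) and `α / α = 1`.
-/

lemma P2.ext_eval {p q : P2} (h : ∀ s t : ℂ, eval ![s, t] p = eval ![s, t] q) : p = q := by
  refine MvPolynomial.funext fun x => ?_
  have hx : x = ![x 0, x 1] := by ext k; fin_cases k <;> rfl
  rw [hx]; exact h _ _

lemma eval_subST (i : ℤ) (a s t : ℂ) (g : P2) :
    eval ![s, t] (subST i a g) = eval ![s - i, t + a] g := by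
  change aeval ![s, t] (aeval _ g) = aeval _ g
  rw [comp_aeval_apply]
  congr 1
  ext k; fin_cases k <;> simp

section Evaluation
variable (lam alp bet gam s t : ℂ) (i : ℤ) (g : P2)

lemma eval_thE : eval ![s, t] (thE lam alp bet i g) =
    lam ^ i * alp * (t / 2 + bet) * eval ![s - i, t - 2] g := by
  simp only [thE, smul_eq_C_mul, map_mul, map_add, eval_C, eval_X, Matrix.cons_val_one,
    Matrix.cons_val_fin_one, eval_subST, sub_eq_add_neg]
  ring

lemma eval_thF : eval ![s, t] (thF lam alp bet i g) =
    -(lam ^ i / alp) * (t / 2 - bet) * eval ![s - i, t + 2] g := by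
  simp only [thF, smul_eq_C_mul, map_mul, map_sub, eval_C, eval_X, Matrix.cons_val_one,
    Matrix.cons_val_fin_one, eval_subST]
  ring

lemma eval_thH : eval ![s, t] (thH lam i g) = lam ^ i * t * eval ![s - i, t] g := by
  simp only [thH, smul_eq_C_mul, map_mul, eval_C, eval_X, Matrix.cons_val_one,
    Matrix.cons_val_fin_one, eval_subST, add_zero]
  ring

lemma eval_thD : eval ![s, t] (thD lam gam i g) =
    lam ^ i * (s + i * gam) * eval ![s - i, t] g := by
  simp only [thD, smul_eq_C_mul, map_mul, map_add, eval_C, eval_X, Matrix.cons_val_zero,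
    eval_subST, add_zero]
  ring

end Evaluation

section Brackets
variable {lam alp bet gam : ℂ} (i j : ℤ) (g : P2)

lemma bracket_thE_thF (hlam : lam ≠ 0) (halp : alp ≠ 0) :
    thE lam alp bet i (thF lam alp bet j g) - thF lam alp bet j (thE lam alp bet i g) =
      thH lam (i + j) g := by
  refine P2.ext_eval fun s t => ?_
  simp only [map_sub, eval_thE, eval_thF, eval_thH, zpow_add₀ hlam]
  push_cast
  field_simp
  -- `ring_nf` also normalises the evaluation points, e.g. `s - i - j` and `s - (i + j)`
  ring_nf

lemma bracket_thH_thE (hlam : lam ≠ 0) :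
    thH lam i (thE lam alp bet j g) - thE lam alp bet j (thH lam i g) =
      (2 : ℂ) • thE lam alp bet (i + j) g := by
  refine P2.ext_eval fun s t => ?_
  simp only [map_sub, smul_eval, eval_thE, eval_thH, zpow_add₀ hlam]
  push_cast
  ring_nf

lemma bracket_thH_thF (hlam : lam ≠ 0) :
    thH lam i (thF lam alp bet j g) - thF lam alp bet j (thH lam i g) =
      (-2 : ℂ) • thF lam alp bet (i + j) g := by
  refine P2.ext_eval fun s t => ?_
  simp only [map_sub, smul_eval, eval_thF, eval_thH, zpow_add₀ hlam]
  push_cast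
  ring_nf

lemma bracket_thD_thD (hlam : lam ≠ 0) :
    thD lam gam i (thD lam gam j g) - thD lam gam j (thD lam gam i g) =
      ((j : ℂ) - (i : ℂ)) • thD lam gam (i + j) g := by
  refine P2.ext_eval fun s t => ?_
  simp only [map_sub, smul_eval, eval_thD, zpow_add₀ hlam]
  push_cast
  ring_nf

lemma bracket_thD_thH (hlam : lam ≠ 0) :
    thD lam gam i (thH lam j g) - thH lam j (thD lam gam i g) = (j : ℂ) • thH lam (i + j) g := by
  refine P2.ext_eval fun s t => ?_
  simp only [map_sub, smul_eval, eval_thD, eval_thH, zpow_add₀ hlam]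
  push_cast
  ring_nf

lemma thH_comm :
    thH lam i (thH lam j g) = thH lam j (thH lam i g) := by
  refine P2.ext_eval fun s t => ?_
  simp only [eval_thH]
  ring_nf

lemma bracket_thD_thE (hlam : lam ≠ 0) :
    thD lam gam i (thE lam alp bet j g) - thE lam alp bet j (thD lam gam i g) =
      (j : ℂ) • thE lam alp bet (i + j) g := by
  refine P2.ext_eval fun s t => ?_
  simp only [map_sub, smul_eval, eval_thD, eval_thE, zpow_add₀ hlam]
  push_cast
  ring_nf

lemma bracket_thD_thF (hlam : lam ≠ 0) :
    thD lam gam i (thF lam alp bet j g) - thF lam alp bet j (thD lam gam i g) =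
      (j : ℂ) • thF lam alp bet (i + j) g := by
  refine P2.ext_eval fun s t => ?_
  simp only [map_sub, smul_eval, eval_thD, eval_thF, zpow_add₀ hlam]
  push_cast
  ring_nf

lemma thE_comm :
    thE lam alp bet i (thE lam alp bet j g) = thE lam alp bet j (thE lam alp bet i g) := by
  refine P2.ext_eval fun s t => ?_
  simp only [eval_thE]
  ring_nf

lemma thF_comm :
    thF lam alp bet i (thF lam alp bet j g) = thF lam alp bet j (thF lam alp bet i g) := by
  refine P2.ext_eval fun s t => ?_
  simp only [eval_thF]
  ring_nf

end Brackets

/-- The formulas for `Θ(λ,α,β,γ)` make `ℂ[s,t]` a module over the affine-Virasoro algebra of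
type `A₁`: the action respects all the defining Lie brackets. -/
theorem stmt9 (lam alp : ℂ) (hlam : lam ≠ 0) (halp : alp ≠ 0) (bet gam : ℂ) :
    ∀ (i j : ℤ) (g : P2),
      (thE lam alp bet i (thF lam alp bet j g) - thF lam alp bet j (thE lam alp bet i g) =
        thH lam (i + j) g + (if i + j = 0 then (i : ℂ) else 0) • thC g) ∧
      (thH lam i (thE lam alp bet j g) - thE lam alp bet j (thH lam i g) =
        (2 : ℂ) • thE lam alp bet (i + j) g) ∧
      (thH lam i (thF lam alp bet j g) - thF lam alp bet j (thH lam i g) =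
        (-2 : ℂ) • thF lam alp bet (i + j) g) ∧
      (thD lam gam i (thD lam gam j g) - thD lam gam j (thD lam gam i g) =
        ((j : ℂ) - (i : ℂ)) • thD lam gam (i + j) g +
          (if i + j = 0 then ((i : ℂ) ^ 3 - (i : ℂ)) / 12 else 0) • thC g) ∧
      (thD lam gam i (thH lam j g) - thH lam j (thD lam gam i g) =
        (j : ℂ) • thH lam (i + j) g) ∧
      (thH lam i (thH lam j g) - thH lam j (thH lam i g) =
        (if i + j = 0 then (-2 * (i : ℂ)) else 0) • thC g) ∧
      (thD lam gam i (thE lam alp bet j g) - thE lam alp bet j (thD lam gam i g) =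
        (j : ℂ) • thE lam alp bet (i + j) g) ∧
      (thD lam gam i (thF lam alp bet j g) - thF lam alp bet j (thD lam gam i g) =
        (j : ℂ) • thF lam alp bet (i + j) g) ∧
      (thE lam alp bet i (thE lam alp bet j g) = thE lam alp bet j (thE lam alp bet i g)) ∧
      (thF lam alp bet i (thF lam alp bet j g) = thF lam alp bet j (thF lam alp bet i g)) ∧
      (thE lam alp bet i (thC g) = thC (thE lam alp bet i g)) ∧
      (thF lam alp bet i (thC g) = thC (thF lam alp bet i g)) ∧
      (thH lam i (thC g) = thC (thH lam i g)) ∧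
      (thD lam gam i (thC g) = thC (thD lam gam i g)) := by
  intro i j g
  simp only [thC, smul_zero, add_zero]
  refine ⟨bracket_thE_thF i j g hlam halp, bracket_thH_thE i j g hlam, bracket_thH_thF i j g hlam,
    bracket_thD_thD i j g hlam, bracket_thD_thH i j g hlam, sub_eq_zero.2 (thH_comm i j g),
    bracket_thD_thE i j g hlam, bracket_thD_thF i j g hlam, thE_comm i j g, thF_comm i j g,
    ?_, ?_, ?_, ?_⟩ <;>
  simp only [thE, thF, thH, thD, map_zero, mul_zero, smul_zero]
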